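/- arXiv:2512.23182 — 5 statements merged into one kernel-verified Lean document; each statement's English description precedes it below -/
import Mathlib

section
/- Under the stated projection setting, the k-th (continuous) eigenvalue satisfies the explicit upper bound μ_k ≤ μ_{k,h} + C_h². -/
open Module

lemma key_real (μ C t p g G : ℝ) (hμ : 0 ≤ μ) (hC : 0 ≤ C) (ht : 0 ≤ t) (hp : 0 < p)
    (hg : 0 ≤ g) (hG : 0 ≤ G) (hg2 : μ * (t ^ 2 + p ^ 2) ≤ g ^ 2) (hGg : g - C * t ≤ G) :
    μ - C ^ 2 ≤ G ^ 2 / p ^ 2 := by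
  rcases le_or_gt μ (C ^ 2) with h | h
  · have : (0:ℝ) ≤ G ^ 2 / p ^ 2 := by positivity
    linarith
  · have hμpos : 0 < μ := lt_of_le_of_lt (sq_nonneg C) h
    set g0 := Real.sqrt (μ * (t ^ 2 + p ^ 2)) with hg0def
    have hg0nn : 0 ≤ g0 := Real.sqrt_nonneg _
    have hg0sq : g0 ^ 2 = μ * (t ^ 2 + p ^ 2) := Real.sq_sqrt (by positivity)
    have hgg0 : g0 ≤ g := by nlinarith [hg0sq]
    have hCt : C * t ≤ g0 := by
      nlinarith [mul_pos hμpos (mul_pos hp hp), sq_nonneg t]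
    have hG2 : (g0 - C * t) ^ 2 ≤ G ^ 2 := by nlinarith
    have key : μ * ((μ - C ^ 2) * p ^ 2) ≤ μ * ((g0 - C * t) ^ 2) := by
      nlinarith [sq_nonneg (μ * t - C * g0)]
    have h2 : (μ - C ^ 2) * p ^ 2 ≤ (g0 - C * t) ^ 2 := le_of_mul_le_mul_left key hμpos
    rw [le_div_iff₀ (by positivity)]
    linarith

/-- Projection-based explicit upper bound for the k-th eigenvalue:
    μ_k ≤ μ_{k,h} + C_h². -/
theorem projection_upper_bound_mu
    {Z W : Type*} [AddCommGroup Z] [Module ℝ Z]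
    [NormedAddCommGroup W] [InnerProductSpace ℝ W]
    (a : Z →ₗ[ℝ] Z →ₗ[ℝ] ℝ)
    (ha_symm : ∀ u v : Z, a u v = a v u)
    (ha_psd : ∀ v : Z, 0 ≤ a v v)
    (γ : Z →ₗ[ℝ] W)
    (Vh : Submodule ℝ Z) [FiniteDimensional ℝ Vh]
    (ha_pos : ∀ v ∈ Vh, v ≠ 0 → 0 < a v v)
    (Ph : Z →ₗ[ℝ] Z)
    (hPh_mem : ∀ u : Z, Ph u ∈ Vh)
    (hPh_orth : ∀ u : Z, ∀ vh ∈ Vh, a (u - Ph u) vh = 0)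
    (Ch : ℝ) (hCh : 0 ≤ Ch)
    (hCh_bound : ∀ v : Z, ‖γ (v - Ph v)‖ ≤ Ch * Real.sqrt (a (v - Ph v) (v - Ph v)))
    (R : Z → ℝ)
    (hR : ∀ v : Z, R v = ‖γ v‖ ^ 2 / a v v)
    (k : ℕ) (hk1 : 1 ≤ k) (hkd : k ≤ finrank ℝ Vh)
    (μ : Fin k → ℝ) (hμ_anti : Antitone μ) (hμ_nonneg : ∀ i, 0 ≤ μ i)
    (u : Fin k → Z)
    (h_orth : ∀ i j, a (u i) (u j) = if i = j then (1 : ℝ) else 0)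
    (h_eig : ∀ i j, (inner ℝ (γ (u i)) (γ (u j)) : ℝ) = if i = j then μ i else 0)
    (μkh : ℝ)
    (hμkh : IsGreatest {m : ℝ | ∃ H : Submodule ℝ Z, H ≤ Vh ∧ finrank ℝ H = k ∧
        IsLeast (R '' {x : Z | x ∈ H ∧ x ≠ 0}) m} μkh) :
    μ ⟨k - 1, by omega⟩ ≤ μkh + Ch ^ 2 := by
  classical
  have hkk : k - 1 < k := by omega
  set i0 : Fin k := ⟨k - 1, hkk⟩ with hi0
  have hμmin : ∀ i : Fin k, μ i0 ≤ μ i := by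
    intro i
    apply hμ_anti
    rw [Fin.le_def]
    have := i.isLt
    simp only [hi0]
    omega
  -- the linear parametrization of the span of the eigenvectors
  let L : (Fin k → ℝ) →ₗ[ℝ] Z :=
    { toFun := fun c => ∑ i, c i • u i
      map_add' := fun x y => by simp [add_smul, Finset.sum_add_distrib]
      map_smul' := fun r x => by simp [smul_smul, Finset.smul_sum] }
  have hLdef : ∀ c, L c = ∑ i, c i • u i := fun c => rfl
  have haL : ∀ c : Fin k → ℝ, a (L c) (L c) = ∑ i, (c i) ^ 2 := by
    intro c
    rw [hLdef]
    simp [map_sum, map_smul, LinearMap.sum_apply, h_orth, Finset.mul_sum, mul_ite, pow_two]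
  have hγL : ∀ c : Fin k → ℝ, ‖γ (L c)‖ ^ 2 = ∑ i, (c i) ^ 2 * μ i := by
    intro c
    rw [hLdef, ← real_inner_self_eq_norm_sq]
    simp only [map_sum, map_smul, sum_inner, inner_sum, real_inner_smul_left,
      real_inner_smul_right, h_eig, mul_ite, mul_zero, Finset.sum_ite_eq, Finset.mem_univ,
      if_true]
    rw [Finset.sum_comm]
    simp [Finset.sum_ite_eq, pow_two]
    exact Finset.sum_congr rfl fun i _ => by ring
  have hγL_ge : ∀ c : Fin k → ℝ, μ i0 * a (L c) (L c) ≤ ‖γ (L c)‖ ^ 2 := by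
    intro c
    rw [haL, hγL, Finset.mul_sum]
    apply Finset.sum_le_sum
    intro i _
    have := hμmin i
    nlinarith [sq_nonneg (c i)]
  -- Pythagoras
  have hPyth : ∀ v : Z, a v v = a (v - Ph v) (v - Ph v) + a (Ph v) (Ph v) := by
    intro v
    have h1 : a (v - Ph v) (Ph v) = 0 := hPh_orth v (Ph v) (hPh_mem v)
    have h1' : a v (Ph v) = a (Ph v) (Ph v) := by
      simp only [map_sub, LinearMap.sub_apply] at h1
      linarith
    have h2' : a (Ph v) v = a (Ph v) (Ph v) := by rw [ha_symm]; exact h1'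
    simp only [map_sub, LinearMap.sub_apply]
    linarith
  -- the key per-vector inequality
  have hkey : ∀ c : Fin k → ℝ, Ph (L c) ≠ 0 → μ i0 - Ch ^ 2 ≤ R (Ph (L c)) := by
    intro c hne
    have hp2 : 0 < a (Ph (L c)) (Ph (L c)) := ha_pos _ (hPh_mem _) hne
    have ht2 : Real.sqrt (a (L c - Ph (L c)) (L c - Ph (L c))) ^ 2
        = a (L c - Ph (L c)) (L c - Ph (L c)) := Real.sq_sqrt (ha_psd _)
    have hp2' : Real.sqrt (a (Ph (L c)) (Ph (L c))) ^ 2 = a (Ph (L c)) (Ph (L c)) :=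
      Real.sq_sqrt (ha_psd _)
    have hppos : 0 < Real.sqrt (a (Ph (L c)) (Ph (L c))) := Real.sqrt_pos.2 hp2
    have hg2 : μ i0 * (Real.sqrt (a (L c - Ph (L c)) (L c - Ph (L c))) ^ 2
        + Real.sqrt (a (Ph (L c)) (Ph (L c))) ^ 2) ≤ ‖γ (L c)‖ ^ 2 := by
      rw [ht2, hp2', ← hPyth (L c)]
      exact hγL_ge c
    have hGg : ‖γ (L c)‖ - Ch * Real.sqrt (a (L c - Ph (L c)) (L c - Ph (L c)))
        ≤ ‖γ (Ph (L c))‖ := by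
      have h3 := hCh_bound (L c)
      have h4 : ‖γ (L c)‖ ≤ ‖γ (Ph (L c))‖ + ‖γ (L c - Ph (L c))‖ := by
        have h5 : γ (L c) = γ (Ph (L c)) + γ (L c - Ph (L c)) := by rw [map_sub]; abel
        rw [h5]
        exact norm_add_le _ _
      linarith
    have hfin := key_real (μ i0) Ch _ _ _ _ (hμ_nonneg i0) hCh (Real.sqrt_nonneg _)
      hppos (norm_nonneg _) (norm_nonneg _) hg2 hGg
    rw [hR, ← hp2']
    exact hfin
  have hμkh0 : 0 ≤ μkh := by
    obtain ⟨H0, hH0V, _, hL0⟩ := hμkh.1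
    obtain ⟨x, ⟨hxH, hx0⟩, hxR⟩ := hL0.1
    rw [← hxR, hR]
    exact div_nonneg (by positivity) (le_of_lt (ha_pos x (hH0V hxH) hx0))
  by_cases hinj : Function.Injective (Ph ∘ₗ L)
  · -- injective case
    have hMc : ∀ c, (Ph ∘ₗ L) c = Ph (L c) := fun c => rfl
    have hHV : LinearMap.range (Ph ∘ₗ L) ≤ Vh := by
      rintro x ⟨c, rfl⟩
      exact hPh_mem _
    have hfinH : finrank ℝ (LinearMap.range (Ph ∘ₗ L) : Submodule ℝ Z) = k := by
      rw [LinearMap.finrank_range_of_inj hinj, Module.finrank_fin_fun]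
    have hMne : ∀ c : Fin k → ℝ, c ≠ 0 → (Ph ∘ₗ L) c ≠ 0 := by
      intro c hc h0
      exact hc (hinj (by rw [h0, map_zero]))
    have hcont_num : Continuous fun c : Fin k → ℝ => ‖γ ((Ph ∘ₗ L) c)‖ ^ 2 :=
      ((γ.comp (Ph ∘ₗ L)).continuous_of_finiteDimensional.norm.pow 2)
    have hexp : ∀ c : Fin k → ℝ, a ((Ph ∘ₗ L) c) ((Ph ∘ₗ L) c)
        = ∑ i, ∑ j, c i * c j * a (Ph (u i)) (Ph (u j)) := by
      intro c
      have h1 : (Ph ∘ₗ L) c = ∑ i, c i • Ph (u i) := by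
        rw [hMc, hLdef, map_sum]
        simp [map_smul]
      rw [h1]
      simp only [map_sum, map_smul, LinearMap.sum_apply, LinearMap.smul_apply, smul_eq_mul]
      refine Finset.sum_congr rfl fun i _ => ?_
      rw [Finset.mul_sum]
      refine Finset.sum_congr rfl fun j _ => ?_
      rw [ha_symm (Ph (u j)) (Ph (u i))]
      ring
    have hcont_den : Continuous fun c : Fin k → ℝ => a ((Ph ∘ₗ L) c) ((Ph ∘ₗ L) c) := by
      have heq : (fun c : Fin k → ℝ => a ((Ph ∘ₗ L) c) ((Ph ∘ₗ L) c))
          = fun c => ∑ i, ∑ j, c i * c j * a (Ph (u i)) (Ph (u j)) := funext hexp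
      rw [heq]
      apply continuous_finset_sum
      intro i _
      apply continuous_finset_sum
      intro j _
      exact ((continuous_apply i).mul (continuous_apply j)).mul continuous_const
    have hScomp : IsCompact (Metric.sphere (0 : Fin k → ℝ) 1) := isCompact_sphere 0 1
    have hSne : (Metric.sphere (0 : Fin k → ℝ) 1).Nonempty := by
      refine ⟨Pi.single i0 1, ?_⟩
      rw [mem_sphere_zero_iff_norm, Pi.norm_single]
      norm_num
    have hContOn : ContinuousOn
        (fun c : Fin k → ℝ => ‖γ ((Ph ∘ₗ L) c)‖ ^ 2 / a ((Ph ∘ₗ L) c) ((Ph ∘ₗ L) c))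
        (Metric.sphere 0 1) := by
      apply ContinuousOn.div hcont_num.continuousOn hcont_den.continuousOn
      intro c hc
      have hc0 : c ≠ 0 := by
        intro h
        rw [mem_sphere_zero_iff_norm, h, norm_zero] at hc
        norm_num at hc
      exact ne_of_gt (ha_pos _ (hPh_mem _) (hMne c hc0))
    obtain ⟨c₀, hc₀S, hminOn⟩ := hScomp.exists_isMinOn hSne hContOn
    have hc₀0 : c₀ ≠ 0 := by
      intro h
      rw [mem_sphere_zero_iff_norm, h, norm_zero] at hc₀S
      norm_num at hc₀S
    have hRhom : ∀ (r : ℝ), r ≠ 0 → ∀ x : Z, R (r • x) = R x := by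
      intro r hr x
      rw [hR, hR]
      have hnum : ‖γ (r • x)‖ ^ 2 = r ^ 2 * ‖γ x‖ ^ 2 := by
        rw [map_smul, norm_smul]
        simp [mul_pow, sq_abs, Real.norm_eq_abs]
      have hden : a (r • x) (r • x) = r ^ 2 * a x x := by
        simp only [map_smul, LinearMap.smul_apply, smul_eq_mul]
        ring
      rw [hnum, hden, mul_div_mul_left _ _ (pow_ne_zero 2 hr)]
    have hmem : R ((Ph ∘ₗ L) c₀) ∈ {m : ℝ | ∃ H : Submodule ℝ Z, H ≤ Vh ∧ finrank ℝ H = k ∧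
        IsLeast (R '' {x : Z | x ∈ H ∧ x ≠ 0}) m} := by
      refine ⟨LinearMap.range (Ph ∘ₗ L), hHV, hfinH, ?_, ?_⟩
      · exact ⟨(Ph ∘ₗ L) c₀, ⟨⟨c₀, rfl⟩, hMne c₀ hc₀0⟩, rfl⟩
      · rintro y ⟨x, ⟨hxH, hx0⟩, rfl⟩
        obtain ⟨c, rfl⟩ := hxH
        have hc0 : c ≠ 0 := fun h => hx0 (by rw [h, map_zero])
        have hcn : ‖c‖ ≠ 0 := norm_ne_zero_iff.2 hc0
        have hcS : (‖c‖⁻¹ • c) ∈ Metric.sphere (0 : Fin k → ℝ) 1 := by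
          rw [mem_sphere_zero_iff_norm, norm_smul, norm_inv, norm_norm, inv_mul_cancel₀ hcn]
        have h7 := isMinOn_iff.1 hminOn _ hcS
        have h8 : R ((Ph ∘ₗ L) (‖c‖⁻¹ • c)) = R ((Ph ∘ₗ L) c) := by
          rw [map_smul]
          exact hRhom _ (inv_ne_zero hcn) _
        rw [← hR, ← hR, h8] at h7
        exact h7
    have h9 := hμkh.2 hmem
    have h10 := hkey c₀ (hMne c₀ hc₀0)
    rw [← hMc c₀] at h10
    show μ i0 ≤ μkh + Ch ^ 2
    linarith
  · -- non-injective case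
    have hex : ∃ c : Fin k → ℝ, c ≠ 0 ∧ Ph (L c) = 0 := by
      by_contra h
      push_neg at h
      apply hinj
      intro x y hxy
      have hz : Ph (L (x - y)) = 0 := by
        rw [map_sub, map_sub]
        rw [show Ph (L x) = Ph (L y) from hxy]
        abel
      by_contra hne
      exact h (x - y) (sub_ne_zero.2 hne) hz
    obtain ⟨c, hc0, hPc⟩ := hex
    have hA : 0 < a (L c) (L c) := by
      rw [haL]
      obtain ⟨j, hj⟩ : ∃ j, c j ≠ 0 := by
        by_contra h
        push_neg at h
        exact hc0 (funext h)
      exact Finset.sum_pos' (fun i _ => sq_nonneg _) ⟨j, Finset.mem_univ j, by positivity⟩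
    have hb := hCh_bound (L c)
    rw [hPc, sub_zero] at hb
    have hb2 : ‖γ (L c)‖ ^ 2 ≤ Ch ^ 2 * a (L c) (L c) := by
      have h1 : (Ch * Real.sqrt (a (L c) (L c))) ^ 2 = Ch ^ 2 * a (L c) (L c) := by
        rw [mul_pow, Real.sq_sqrt (ha_psd _)]
      nlinarith [norm_nonneg (γ (L c)), Real.sqrt_nonneg (a (L c) (L c)),
        mul_nonneg hCh (Real.sqrt_nonneg (a (L c) (L c)))]
    have h2 := hγL_ge c
    have h3 : μ i0 ≤ Ch ^ 2 :=
      le_of_mul_le_mul_right (by linarith : μ i0 * a (L c) (L c) ≤ Ch ^ 2 * a (L c) (L c)) hA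
    show μ i0 ≤ μkh + Ch ^ 2
    linarith
end

section
/- Assume: (i) for every v in the span of v_1, …, v_n there exists ũ ∈ D with M(ũ, φ) = N(v, φ) for all φ ∈ D; and (ii) for every nonzero coefficient vector c ∈ ℝⁿ, writing v = Σ_{i=1}^n c_i v_i, one has N(v, v) > 0 and M(v, v) < ρ N(v, v) (equivalently, A_1 is positive definite and ρ exceeds the largest eigenvalue Λ_n of the generalized matrix eigenvalue problem A_0 x = Λ A_1 x). Then the matrix B = A_0 − 2ρ A_1 + ρ² A_2 is positive definite; equivalently, for every nonzero c ∈ ℝⁿ, with v = Σ c_i v_i and w = Σ c_i w_i, one has M(v, v) − 2ρ N(v, v) + ρ² b_G(w, w) > 0. -/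
open Matrix

section auxLG

variable {D : Type*} [AddCommGroup D] [Module ℝ D]

lemma lg_psd_zero_pair (M : D →ₗ[ℝ] D →ₗ[ℝ] ℝ) (hsymm : ∀ u v : D, M u v = M v u)
    (hpsd : ∀ u : D, 0 ≤ M u u) {z x : D} (hz : M z z = 0) : M z x = 0 := by
  by_contra h
  set a := M z x with ha
  set b := M x x with hb
  have hball : ∀ t : ℝ, 0 ≤ 2 * t * a + t ^ 2 * b := by
    intro t
    have h1 := hpsd (z + t • x)
    simp only [map_add, LinearMap.map_smul, LinearMap.add_apply, LinearMap.smul_apply,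
      smul_eq_mul, _root_.map_smul] at h1
    have hsx : M x z = a := by rw [hsymm x z, ha]
    rw [hz, hsx, ← ha, ← hb] at h1
    nlinarith [h1]
  have hb0 : 0 ≤ b := hpsd x
  have h2 := hball (-a / (b + 1))
  have hb1 : 0 < b + 1 := by linarith
  have ha2 : 0 < a ^ 2 := by positivity
  field_simp at h2
  nlinarith [h2, mul_pos ha2 hb1, mul_nonneg (le_of_lt ha2) hb0]

lemma lg_bilin_sum_sum (B : D →ₗ[ℝ] D →ₗ[ℝ] ℝ) {n : ℕ} (c : Fin n → ℝ) (u w : Fin n → D) :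
    B (∑ i, c i • u i) (∑ j, c j • w j) = ∑ i, ∑ j, c i * c j * B (u i) (w j) := by
  have h1 : ∀ φ : D, B (∑ i, c i • u i) φ = ∑ i, c i * B (u i) φ := by
    intro φ
    rw [map_sum]
    simp [LinearMap.sum_apply, _root_.map_smul, smul_eq_mul]
  rw [h1]
  refine Finset.sum_congr rfl fun i _ => ?_
  simp only [map_sum, _root_.map_smul, smul_eq_mul, Finset.mul_sum]
  refine Finset.sum_congr rfl fun j _ => ?_
  ring

end auxLG

/-- Positive definiteness of the matrix `B = A₀ − 2ρ A₁ + ρ² A₂` in the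
    Lehmann–Goerisch setting, provided `A₁` is positive definite and
    `ρ` exceeds the largest eigenvalue of `A₀ x = Λ A₁ x`. -/
theorem lehmann_goerisch_B_posDef
    {D X : Type*} [AddCommGroup D] [Module ℝ D] [AddCommGroup X] [Module ℝ X]
    (M N : D →ₗ[ℝ] D →ₗ[ℝ] ℝ)
    (hM_symm : ∀ u v : D, M u v = M v u)
    (hN_symm : ∀ u v : D, N u v = N v u)
    (bG : X →ₗ[ℝ] X →ₗ[ℝ] ℝ)
    (hbG_symm : ∀ x y : X, bG x y = bG y x)
    (hbG_psd : ∀ x : X, 0 ≤ bG x x)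
    (T : D →ₗ[ℝ] X)
    (hT : ∀ u v : D, bG (T u) (T v) = M u v)
    (n : ℕ) (v : Fin n → D) (w : Fin n → X)
    (hw : ∀ i : Fin n, ∀ φ : D, bG (w i) (T φ) = N (v i) φ)
    (ρ : ℝ) (hρ : 0 < ρ)
    (A0 A1 A2 : Matrix (Fin n) (Fin n) ℝ)
    (hA0 : ∀ i j, A0 i j = M (v i) (v j))
    (hA1 : ∀ i j, A1 i j = N (v i) (v j))
    (hA2 : ∀ i j, A2 i j = bG (w i) (w j))
    (hsolv : ∀ x ∈ Submodule.span ℝ (Set.range v), ∃ ut : D, ∀ φ : D, M ut φ = N x φ)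
    (hpos : ∀ c : Fin n → ℝ, c ≠ 0 →
      0 < N (∑ i, c i • v i) (∑ i, c i • v i) ∧
      M (∑ i, c i • v i) (∑ i, c i • v i) < ρ * N (∑ i, c i • v i) (∑ i, c i • v i)) :
    (A0 - (2 * ρ) • A1 + ρ ^ 2 • A2).PosDef ∧
    (∀ c : Fin n → ℝ, c ≠ 0 →
      0 < M (∑ i, c i • v i) (∑ i, c i • v i)
          - 2 * ρ * N (∑ i, c i • v i) (∑ i, c i • v i)
          + ρ ^ 2 * bG (∑ i, c i • w i) (∑ i, c i • w i)) := by
  have hMpsd : ∀ x : D, 0 ≤ M x x := fun x => (hT x x) ▸ hbG_psd (T x)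
  -- the key scalar inequality
  have key : ∀ c : Fin n → ℝ, c ≠ 0 →
      0 < M (∑ i, c i • v i) (∑ i, c i • v i)
          - 2 * ρ * N (∑ i, c i • v i) (∑ i, c i • v i)
          + ρ ^ 2 * bG (∑ i, c i • w i) (∑ i, c i • w i) := by
    intro c hc
    set V := ∑ i, c i • v i with hV
    set W := ∑ i, c i • w i with hW
    have hVmem : V ∈ Submodule.span ℝ (Set.range v) :=
      Submodule.sum_mem _ fun i _ => Submodule.smul_mem _ _ (Submodule.subset_span ⟨i, rfl⟩)
    obtain ⟨u, hu⟩ := hsolv V hVmem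
    have hwT : ∀ φ : D, bG W (T φ) = N V φ := by
      intro φ
      rw [hW, hV, map_sum, map_sum]
      simp [LinearMap.sum_apply, _root_.map_smul, smul_eq_mul, hw]
    -- bG W W ≥ M u u
    have hWTu : bG W (T u) = M u u := by rw [hwT u, ← hu u]
    have hTuW : bG (T u) W = M u u := by rw [hbG_symm, hWTu]
    have hexp : bG (W - T u) (W - T u) = bG W W - bG W (T u) - bG (T u) W + bG (T u) (T u) := by
      simp only [map_sub, LinearMap.sub_apply]
      ring
    have hle : M u u ≤ bG W W := by
      have h0 := hbG_psd (W - T u)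
      rw [hexp, hWTu, hTuW, hT u u] at h0
      linarith
    have hpc := hpos c hc
    by_contra hcon
    push_neg at hcon
    have hMuV : M u V = N V V := hu V
    have hMVu : M V u = N V V := by rw [hM_symm]; exact hMuV
    have hq : M (V - ρ • u) (V - ρ • u)
        = M V V - 2 * ρ * N V V + ρ ^ 2 * M u u := by
      simp only [map_sub, LinearMap.sub_apply, _root_.map_smul, LinearMap.map_smul,
        LinearMap.smul_apply, smul_eq_mul]
      rw [hMVu, hMuV]
      ring
    have hq0 : 0 ≤ M (V - ρ • u) (V - ρ • u) := hMpsd _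
    have hqz : M (V - ρ • u) (V - ρ • u) = 0 := by
      have hρ2 : 0 ≤ ρ ^ 2 := sq_nonneg ρ
      nlinarith [hq, hq0, hle, hcon, mul_le_mul_of_nonneg_left hle hρ2]
    have hzero := lg_psd_zero_pair M hM_symm hMpsd hqz (x := V)
    simp only [map_sub, LinearMap.sub_apply, _root_.map_smul, LinearMap.map_smul,
      LinearMap.smul_apply, smul_eq_mul] at hzero
    rw [hMuV] at hzero
    linarith [hpc.2]
  refine ⟨posDef_iff_dotProduct_mulVec.mpr ⟨?_, ?_⟩, key⟩
  · -- Hermitian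
    ext i j
    simp only [conjTranspose_apply, Matrix.sub_apply, Matrix.add_apply, Matrix.smul_apply,
      smul_eq_mul, star_trivial, hA0, hA1, hA2, hM_symm (v j) (v i), hN_symm (v j) (v i),
      hbG_symm (w j) (w i)]
  · intro c hc
    have hL : star c ⬝ᵥ ((A0 - (2 * ρ) • A1 + ρ ^ 2 • A2) *ᵥ c)
        = ∑ i, ∑ j, (c i * c j * M (v i) (v j) - 2 * ρ * (c i * c j * N (v i) (v j))
            + ρ ^ 2 * (c i * c j * bG (w i) (w j))) := by
      simp only [dotProduct, mulVec, Matrix.sub_apply, Matrix.add_apply, Matrix.smul_apply,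
        smul_eq_mul, star_trivial, hA0, hA1, hA2, Finset.mul_sum]
      refine Finset.sum_congr rfl fun i _ => Finset.sum_congr rfl fun j _ => by ring
    have hR : M (∑ i, c i • v i) (∑ i, c i • v i)
          - 2 * ρ * N (∑ i, c i • v i) (∑ i, c i • v i)
          + ρ ^ 2 * bG (∑ i, c i • w i) (∑ i, c i • w i)
        = ∑ i, ∑ j, (c i * c j * M (v i) (v j) - 2 * ρ * (c i * c j * N (v i) (v j))
            + ρ ^ 2 * (c i * c j * bG (w i) (w j))) := by
      rw [lg_bilin_sum_sum M c v v, lg_bilin_sum_sum N c v v, lg_bilin_sum_sum bG c w w]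
      simp only [Finset.mul_sum]
      rw [← Finset.sum_sub_distrib, ← Finset.sum_add_distrib]
      refine Finset.sum_congr rfl fun i _ => ?_
      rw [← Finset.sum_sub_distrib, ← Finset.sum_add_distrib]
    rw [hL, ← hR]
    exact key c hc
end

section
/- (Lehmann–Goerisch theorem.) For each k ∈ {1, …, n} with ν_k < 0, the half-open interval [ρ − ρ/(1 − ν_k), ρ) contains at least k eigenvalues of the family {λ_i}_{i∈ℕ}, counted with multiplicity; that is, the set of indices { i ∈ ℕ : ρ − ρ/(1 − ν_k) ≤ λ_i < ρ } has at least k elements. -/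
open Matrix Filter

lemma LG_bessel {D : Type*} [AddCommGroup D] [Module ℝ D]
    (b : D →ₗ[ℝ] D →ₗ[ℝ] ℝ) (hsymm : ∀ x y, b x y = b y x) (hpsd : ∀ x, 0 ≤ b x x)
    (F : Finset ℕ) (e : ℕ → D)
    (horth : ∀ i ∈ F, ∀ j ∈ F, b (e i) (e j) = if i = j then (1:ℝ) else 0)
    (u : D) : ∑ i ∈ F, (b u (e i))^2 ≤ b u u := by
  have h := hpsd (u - ∑ i ∈ F, (b u (e i)) • e i)
  have hbus : b u (∑ i ∈ F, (b u (e i)) • e i) = ∑ i ∈ F, (b u (e i))^2 := by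
    rw [map_sum]
    refine Finset.sum_congr rfl fun i hi => ?_
    rw [_root_.map_smul, smul_eq_mul, sq]
  have hbsu : b (∑ i ∈ F, (b u (e i)) • e i) u = ∑ i ∈ F, (b u (e i))^2 := by
    rw [hsymm, hbus]
  have hbss : b (∑ i ∈ F, (b u (e i)) • e i) (∑ i ∈ F, (b u (e i)) • e i)
      = ∑ i ∈ F, (b u (e i))^2 := by
    rw [map_sum]
    refine Finset.sum_congr rfl fun i hi => ?_
    rw [_root_.map_smul, smul_eq_mul, hsymm (∑ j ∈ F, (b u) (e j) • e j) (e i), map_sum]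
    have : ∀ j ∈ F, b (e i) ((b u (e j)) • e j) = if j = i then b u (e i) else 0 := by
      intro j hj
      rw [_root_.map_smul, smul_eq_mul, horth i hi j hj]
      by_cases hij : i = j
      · subst hij; simp
      · rw [if_neg hij, if_neg (fun hh => hij hh.symm)]; ring
    rw [Finset.sum_congr rfl this, Finset.sum_ite_eq' F i (fun _ => b u (e i)), if_pos hi, sq]
  simp only [map_sub, LinearMap.sub_apply] at h
  rw [hbus, hbsu, hbss] at h
  linarith

lemma LG_kernel {m : ℕ} {α : Type*} [Fintype α] (g : Fin m → α → ℝ)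
    (hcard : Fintype.card α < m) :
    ∃ c : Fin m → ℝ, c ≠ 0 ∧ ∀ a : α, ∑ j, c j * g j a = 0 := by
  let L : (Fin m → ℝ) →ₗ[ℝ] (α → ℝ) :=
    { toFun := fun c a => ∑ j, c j * g j a
      map_add' := by
        intro x y; funext a; simp [add_mul, Finset.sum_add_distrib]
      map_smul' := by
        intro r x; funext a; simp [smul_eq_mul, mul_assoc, Finset.mul_sum] }
  have h1 : Module.finrank ℝ (LinearMap.range L) + Module.finrank ℝ (LinearMap.ker L)
      = m := by
    rw [LinearMap.finrank_range_add_finrank_ker L, Module.finrank_pi, Fintype.card_fin]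
  have h2 : Module.finrank ℝ (LinearMap.range L) ≤ Fintype.card α := by
    have := Submodule.finrank_le (LinearMap.range L)
    rwa [Module.finrank_pi] at this
  have h3 : 0 < Module.finrank ℝ (LinearMap.ker L) := by omega
  have h4 : Nontrivial (LinearMap.ker L) := Module.finrank_pos_iff.mp h3
  obtain ⟨c, hc⟩ := exists_ne (0 : LinearMap.ker L)
  refine ⟨c.1, fun h0 => hc (Subtype.ext h0), fun a => ?_⟩
  have := c.2
  rw [LinearMap.mem_ker] at this
  exact congrFun this a

lemma LG_bilin_sum {D ι κ : Type*} [AddCommGroup D] [Module ℝ D] [Fintype ι] [Fintype κ]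
    (b : D →ₗ[ℝ] D →ₗ[ℝ] ℝ) (d : ι → ℝ) (e : κ → ℝ) (x : ι → D) (y : κ → D) :
    b (∑ i, d i • x i) (∑ j, e j • y j) = ∑ i, ∑ j, d i * e j * b (x i) (y j) := by
  rw [map_sum, Finset.sum_comm]
  refine Finset.sum_congr rfl fun j _ => ?_
  rw [map_sum, LinearMap.sum_apply]
  refine Finset.sum_congr rfl fun i _ => ?_
  rw [_root_.map_smul, _root_.map_smul, LinearMap.smul_apply, smul_eq_mul, smul_eq_mul]
  ring

lemma LG_quad {n : ℕ} (C : Matrix (Fin n) (Fin n) ℝ) (d : Fin n → ℝ) :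
    d ⬝ᵥ (C *ᵥ d) = ∑ p, ∑ q, d p * d q * C p q := by
  simp only [dotProduct, Matrix.mulVec]
  refine Finset.sum_congr rfl fun p _ => ?_
  rw [Finset.mul_sum]
  exact Finset.sum_congr rfl fun q _ => by ring

lemma LG_qfact (ρ ν0 x : ℝ) (h1 : (0:ℝ) < 1 - ν0) :
    (1-ν0)*x^2 - ρ*(1-2*ν0)*x - ν0*ρ^2
      = (1-ν0)*(x-(ρ - ρ/(1-ν0)))*(x-ρ) := by
  field_simp
  ring

lemma LG_qsign (ρ ν0 x : ℝ) (hρ : 0 < ρ) (hν0 : ν0 < 0)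
    (hx : x < ρ - ρ/(1-ν0) ∨ ρ ≤ x) :
    0 ≤ (1-ν0)*x^2 - ρ*(1-2*ν0)*x - ν0*ρ^2 := by
  have h1 : (0:ℝ) < 1 - ν0 := by linarith
  rw [LG_qfact ρ ν0 x h1]
  have hσρ : ρ - ρ/(1-ν0) < ρ := by
    have : 0 < ρ/(1-ν0) := div_pos hρ h1
    linarith
  set s := ρ - ρ/(1-ν0) with hs
  rcases hx with h | h
  · have h2 : 0 < (s - x) * (ρ - x) := mul_pos (by linarith) (by linarith)
    nlinarith
  · have h2 : 0 ≤ (x - s) * (x - ρ) := mul_nonneg (by linarith) (by linarith)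
    nlinarith

lemma LG_qzero (ρ ν0 x : ℝ) (hρ : 0 < ρ) (hν0 : ν0 < 0)
    (hx : x < ρ - ρ/(1-ν0) ∨ ρ ≤ x)
    (h0 : (1-ν0)*x^2 - ρ*(1-2*ν0)*x - ν0*ρ^2 = 0) : x = ρ := by
  have h1 : (0:ℝ) < 1 - ν0 := by linarith
  rw [LG_qfact ρ ν0 x h1] at h0
  have hσρ : ρ - ρ/(1-ν0) < ρ := by
    have : 0 < ρ/(1-ν0) := div_pos hρ h1
    linarith
  set s := ρ - ρ/(1-ν0) with hs
  rcases hx with h | h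
  · exfalso
    have h2 : 0 < (s - x) * (ρ - x) := mul_pos (by linarith) (by linarith)
    nlinarith
  · by_contra hne
    have h3 : ρ < x := lt_of_le_of_ne h (fun hh => hne hh.symm)
    have h2 : 0 < (x - s) * (x - ρ) := mul_pos (by linarith) (by linarith)
    nlinarith

/-- Lehmann–Goerisch theorem: for each `k` with `ν_k < 0`, the interval
    `[ρ − ρ/(1 − ν_k), ρ)` contains at least `k` eigenvalues `λ_i`,
    counted with multiplicity. -/
theorem lehmann_goerisch
    {D X : Type*} [AddCommGroup D] [Module ℝ D] [AddCommGroup X] [Module ℝ X]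
    (M N : D →ₗ[ℝ] D →ₗ[ℝ] ℝ)
    (hM_symm : ∀ u v : D, M u v = M v u)
    (hN_symm : ∀ u v : D, N u v = N v u)
    (hM_pos : ∀ u : D, u ≠ 0 → 0 < M u u)
    (bG : X →ₗ[ℝ] X →ₗ[ℝ] ℝ)
    (hbG_symm : ∀ x y : X, bG x y = bG y x)
    (hbG_psd : ∀ x : X, 0 ≤ bG x x)
    (T : D →ₗ[ℝ] X)
    (hT : ∀ u v : D, bG (T u) (T v) = M u v)
    (lam : ℕ → ℝ) (φ : ℕ → D)
    (h_eig : ∀ i : ℕ, 1 ≤ i → ∀ v : D, M (φ i) v = lam i * N (φ i) v)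
    (h_orth : ∀ i j : ℕ, 1 ≤ i → 1 ≤ j → M (φ i) (φ j) = if i = j then (1 : ℝ) else 0)
    (h_complete : ∀ v : D,
      Tendsto (fun K : ℕ => ∑ i ∈ Finset.Icc 1 K, lam i * (N v (φ i)) ^ 2)
        atTop (nhds (N v v)))
    (n : ℕ) (v : Fin n → D) (w : Fin n → X)
    (hw : ∀ i : Fin n, ∀ ψ : D, bG (w i) (T ψ) = N (v i) ψ)
    (ρ : ℝ) (hρ : 0 < ρ)
    (A0 A1 A2 A B : Matrix (Fin n) (Fin n) ℝ)
    (hA0 : ∀ i j, A0 i j = M (v i) (v j))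
    (hA1 : ∀ i j, A1 i j = N (v i) (v j))
    (hA2 : ∀ i j, A2 i j = bG (w i) (w j))
    (hA : A = A0 - ρ • A1)
    (hB : B = A0 - (2 * ρ) • A1 + ρ ^ 2 • A2)
    (hBpos : B.PosDef)
    (ν : Fin n → ℝ) (hν_mono : Monotone ν)
    (z : Fin n → Fin n → ℝ)
    (hz_orth : ∀ i j, z i ⬝ᵥ (B *ᵥ z j) = if i = j then (1 : ℝ) else 0)
    (hz_eig : ∀ k, A *ᵥ z k = ν k • (B *ᵥ z k)) :
    ∀ k : Fin n, ν k < 0 →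
      ((k : ℕ) + 1 : ℕ∞) ≤
        {i : ℕ | 1 ≤ i ∧ ρ - ρ / (1 - ν k) ≤ lam i ∧ lam i < ρ}.encard := by
  classical
  intro k hνk
  by_contra hcon
  push_neg at hcon
  set ν0 : ℝ := ν k with hν0def
  set σ : ℝ := ρ - ρ / (1 - ν0) with hσdef
  set S : Set ℕ := {i : ℕ | 1 ≤ i ∧ σ ≤ lam i ∧ lam i < ρ} with hSdef
  have h1ν : (0:ℝ) < 1 - ν0 := by linarith
  -- finiteness of S
  have hle : S.encard ≤ ((k:ℕ) : ℕ∞) :=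
    (ENat.lt_add_one_iff (by simp)).mp hcon
  obtain ⟨hfin, hncard⟩ := Set.encard_le_coe_iff_finite_ncard_le.mp hle
  set F : Finset ℕ := hfin.toFinset with hFdef
  have hFcard : F.card ≤ (k:ℕ) := by
    rw [hFdef, ← Set.ncard_eq_toFinset_card S hfin]
    exact hncard
  have hmn : (k:ℕ) + 1 ≤ n := k.2
  set m : ℕ := (k:ℕ) + 1 with hmdef
  set ι : Fin m → Fin n := fun j => Fin.castLE hmn j with hιdef
  set zz : Fin m → (Fin n → ℝ) := fun j => z (ι j) with hzzdef
  set U : Fin m → D := fun j => ∑ p, zz j p • v p with hUdef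
  -- kernel vector
  obtain ⟨c, hc0, hcker⟩ := LG_kernel (m := m) (α := {x // x ∈ F})
      (fun j a => N (U j) (φ a.1)) (by
        have hcc : Fintype.card {x // x ∈ F} = F.card := Fintype.card_coe F
        omega)
  set d : Fin n → ℝ := ∑ j, c j • zz j with hddef
  set u : D := ∑ p, d p • v p with hudef
  set y : X := ∑ p, d p • w p with hydef
  set β : ℕ → ℝ := fun i => N u (φ i) with hβdef
  -- u as combination of U j
  have hu2 : u = ∑ j, c j • U j := by
    rw [hudef]
    calc ∑ p, d p • v p = ∑ p, ∑ j, (c j * zz j p) • v p := by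
          refine Finset.sum_congr rfl fun p _ => ?_
          rw [hddef, ← Finset.sum_smul]
          congr 1
          rw [Finset.sum_apply]
          exact Finset.sum_congr rfl fun j _ => by simp [Pi.smul_apply, smul_eq_mul]
      _ = ∑ j, ∑ p, (c j * zz j p) • v p := Finset.sum_comm
      _ = ∑ j, c j • U j := by
          refine Finset.sum_congr rfl fun j _ => ?_
          rw [hUdef, Finset.smul_sum]
          exact Finset.sum_congr rfl fun p _ => (mul_smul _ _ _)
  -- constraints
  have hβS : ∀ i, i ∈ S → β i = 0 := by
    intro i hiS
    have hiF : i ∈ F := by rw [hFdef, Set.Finite.mem_toFinset]; exact hiS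
    have h1 : β i = ∑ j, c j * N (U j) (φ i) := by
      rw [hβdef]
      simp only []
      rw [hu2, map_sum, LinearMap.sum_apply]
      exact Finset.sum_congr rfl fun j _ => by
        rw [_root_.map_smul, LinearMap.smul_apply, smul_eq_mul]
    rw [h1]
    exact hcker ⟨i, hiF⟩
  -- quadratic identities
  have hMuu : M u u = d ⬝ᵥ (A0 *ᵥ d) := by
    rw [hudef, LG_bilin_sum, LG_quad]
    exact Finset.sum_congr rfl fun p _ => Finset.sum_congr rfl fun q _ => by rw [hA0]
  have hNuu : N u u = d ⬝ᵥ (A1 *ᵥ d) := by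
    rw [hudef, LG_bilin_sum, LG_quad]
    exact Finset.sum_congr rfl fun p _ => Finset.sum_congr rfl fun q _ => by rw [hA1]
  have hGyy : bG y y = d ⬝ᵥ (A2 *ᵥ d) := by
    rw [hydef, LG_bilin_sum, LG_quad]
    exact Finset.sum_congr rfl fun p _ => Finset.sum_congr rfl fun q _ => by rw [hA2]
  have hdotA : d ⬝ᵥ (A *ᵥ d) = M u u - ρ * N u u := by
    rw [hA, Matrix.sub_mulVec, dotProduct_sub, Matrix.smul_mulVec,
      dotProduct_smul, smul_eq_mul, ← hMuu, ← hNuu]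
  have hdotB : d ⬝ᵥ (B *ᵥ d) = M u u - 2*ρ*(N u u) + ρ^2*(bG y y) := by
    rw [hB, Matrix.add_mulVec, Matrix.sub_mulVec, dotProduct_add,
      dotProduct_sub, Matrix.smul_mulVec, Matrix.smul_mulVec,
      dotProduct_smul, dotProduct_smul, smul_eq_mul, smul_eq_mul,
      ← hMuu, ← hNuu, ← hGyy]
  -- z-side identities
  have hAz : ∀ j l : Fin m, zz j ⬝ᵥ (A *ᵥ zz l) = if j = l then ν (ι l) else 0 := by
    intro j l
    rw [hzzdef]
    simp only []
    rw [hz_eig (ι l), dotProduct_smul, smul_eq_mul, hz_orth]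
    by_cases h : j = l
    · subst h; simp
    · rw [if_neg (fun hh => h (Fin.castLE_injective hmn hh)), if_neg h, mul_zero]
  have hBz : ∀ j l : Fin m, zz j ⬝ᵥ (B *ᵥ zz l) = if j = l then 1 else 0 := by
    intro j l
    rw [hzzdef]
    simp only []
    rw [hz_orth]
    by_cases h : j = l
    · subst h; simp
    · rw [if_neg (fun hh => h (Fin.castLE_injective hmn hh)), if_neg h]
  have hdotAz : d ⬝ᵥ (A *ᵥ d) = ∑ j, (c j)^2 * ν (ι j) := by
    rw [← Matrix.toBilin'_apply', hddef, LG_bilin_sum]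
    refine Finset.sum_congr rfl fun j _ => ?_
    rw [Finset.sum_eq_single j]
    · rw [Matrix.toBilin'_apply', hAz j j, if_pos rfl]; ring
    · intro l _ hl
      rw [Matrix.toBilin'_apply', hAz j l, if_neg (fun hh => hl hh.symm), mul_zero]
    · intro h; exact absurd (Finset.mem_univ j) h
  have hdotBz : d ⬝ᵥ (B *ᵥ d) = ∑ j, (c j)^2 := by
    rw [← Matrix.toBilin'_apply', hddef, LG_bilin_sum]
    refine Finset.sum_congr rfl fun j _ => ?_
    rw [Finset.sum_eq_single j]
    · rw [Matrix.toBilin'_apply', hBz j j, if_pos rfl]; ring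
    · intro l _ hl
      rw [Matrix.toBilin'_apply', hBz j l, if_neg (fun hh => hl hh.symm), mul_zero]
    · intro h; exact absurd (Finset.mem_univ j) h
  -- positivity of sum of squares
  have hcpos : 0 < ∑ j, (c j)^2 := by
    obtain ⟨j0, hj0⟩ := Function.ne_iff.mp hc0
    refine Finset.sum_pos' (fun j _ => sq_nonneg _) ⟨j0, Finset.mem_univ _, ?_⟩
    have : c j0 ≠ 0 := by simpa using hj0
    positivity
  -- trial-side inequality
  have hν_le : ∀ j : Fin m, ν (ι j) ≤ ν0 := by
    intro j
    rw [hν0def]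
    apply hν_mono
    rw [Fin.le_def]
    simp only [hιdef, Fin.coe_castLE]
    exact Nat.lt_succ_iff.mp j.2
  have ht0le : d ⬝ᵥ (A *ᵥ d) - ν0 * (d ⬝ᵥ (B *ᵥ d)) ≤ 0 := by
    rw [hdotAz, hdotBz, Finset.mul_sum, ← Finset.sum_sub_distrib]
    apply Finset.sum_nonpos
    intro j _
    have h1 := hν_le j
    nlinarith [sq_nonneg (c j)]
  -- Bessel inequalities
  have hMpsd : ∀ x : D, 0 ≤ M x x := by
    intro x
    by_cases hx : x = 0
    · subst hx; simp
    · exact (hM_pos x hx).le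
  have hMuφ : ∀ i, 1 ≤ i → M u (φ i) = lam i * β i := by
    intro i hi
    rw [hM_symm u (φ i), h_eig i hi u, hN_symm (φ i) u]
  have hSM_le : ∀ K : ℕ, (∑ i ∈ Finset.Icc 1 K, (lam i)^2 * (β i)^2) ≤ M u u := by
    intro K
    have h := LG_bessel M hM_symm hMpsd (Finset.Icc 1 K) φ
      (fun i hi j hj => h_orth i j (Finset.mem_Icc.mp hi).1 (Finset.mem_Icc.mp hj).1) u
    calc (∑ i ∈ Finset.Icc 1 K, (lam i)^2 * (β i)^2)
        = ∑ i ∈ Finset.Icc 1 K, (M u (φ i))^2 := by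
          refine Finset.sum_congr rfl fun i hi => ?_
          rw [hMuφ i (Finset.mem_Icc.mp hi).1, mul_pow]
      _ ≤ M u u := h
  have hyT : ∀ ψ : D, bG y (T ψ) = N u ψ := by
    intro ψ
    rw [hydef, hudef, map_sum, LinearMap.sum_apply, map_sum, LinearMap.sum_apply]
    refine Finset.sum_congr rfl fun p _ => ?_
    rw [_root_.map_smul, _root_.map_smul, LinearMap.smul_apply, LinearMap.smul_apply,
      smul_eq_mul, smul_eq_mul, hw p ψ]
  have hSG_le : ∀ K : ℕ, (∑ i ∈ Finset.Icc 1 K, (β i)^2) ≤ bG y y := by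
    intro K
    have h := LG_bessel bG hbG_symm hbG_psd (Finset.Icc 1 K) (fun i => T (φ i))
      (fun i hi j hj => by
        rw [hT]
        exact h_orth i j (Finset.mem_Icc.mp hi).1 (Finset.mem_Icc.mp hj).1) y
    calc (∑ i ∈ Finset.Icc 1 K, (β i)^2)
        = ∑ i ∈ Finset.Icc 1 K, (bG y (T (φ i)))^2 := by
          refine Finset.sum_congr rfl fun i _ => ?_
          rw [hyT (φ i)]
      _ ≤ bG y y := h
  -- sums and limits
  set SN : ℕ → ℝ := fun K => ∑ i ∈ Finset.Icc 1 K, lam i * (β i)^2 with hSNdef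
  set SM : ℕ → ℝ := fun K => ∑ i ∈ Finset.Icc 1 K, (lam i)^2 * (β i)^2 with hSMdef
  set SG : ℕ → ℝ := fun K => ∑ i ∈ Finset.Icc 1 K, (β i)^2 with hSGdef
  set T3 : ℕ → ℝ := fun K => ∑ i ∈ Finset.Icc 1 K,
      ((1-ν0)*(lam i)^2 - ρ*(1-2*ν0)*(lam i) - ν0*ρ^2) * (β i)^2 with hT3def
  set E : ℕ → ℝ := fun K => ρ*(1-2*ν0)*((N u u) - SN K) with hEdef
  have hSNlim : Tendsto SN atTop (nhds (N u u)) := by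
    simp only [hSNdef, hβdef]
    exact h_complete u
  have hElim : Tendsto E atTop (nhds 0) := by
    have h1 : Tendsto (fun K => N u u - SN K) atTop (nhds (N u u - N u u)) :=
      tendsto_const_nhds.sub hSNlim
    rw [sub_self] at h1
    have h2 := h1.const_mul (ρ*(1-2*ν0))
    rw [mul_zero] at h2
    exact h2
  have hT3split : ∀ K, T3 K = (1-ν0)*SM K - ρ*(1-2*ν0)*SN K - ν0*ρ^2*SG K := by
    intro K
    simp only [hT3def, hSMdef, hSNdef, hSGdef, Finset.mul_sum, ← Finset.sum_sub_distrib]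
    exact Finset.sum_congr rfl fun i _ => by ring
  have hlamS : ∀ i, 1 ≤ i → i ∉ S → (lam i < σ ∨ ρ ≤ lam i) := by
    intro i hi hiS
    rw [hSdef] at hiS
    simp only [Set.mem_setOf_eq] at hiS
    push_neg at hiS
    rcases lt_or_ge (lam i) σ with h | h
    · exact Or.inl h
    · exact Or.inr (hiS hi h)
  have hq0 : ∀ i, 1 ≤ i →
      0 ≤ ((1-ν0)*(lam i)^2 - ρ*(1-2*ν0)*(lam i) - ν0*ρ^2) * (β i)^2 := by
    intro i hi
    by_cases hiS : i ∈ S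
    · rw [hβS i hiS]; simp
    · have hlam := hlamS i hi hiS
      rw [hσdef] at hlam
      exact mul_nonneg (LG_qsign ρ ν0 (lam i) hρ hνk hlam) (sq_nonneg _)
  have hT3nonneg : ∀ K, 0 ≤ T3 K := by
    intro K
    simp only [hT3def]
    exact Finset.sum_nonneg fun i hi => hq0 i (Finset.mem_Icc.mp hi).1
  have ht0eq : ∀ K, d ⬝ᵥ (A *ᵥ d) - ν0 * (d ⬝ᵥ (B *ᵥ d))
      = (1-ν0)*(M u u - SM K) + (-ν0)*ρ^2*(bG y y - SG K) + T3 K - E K := by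
    intro K
    rw [hdotA, hdotB, hT3split K]
    simp only [hEdef]
    ring
  have hMbound : ∀ K, (1-ν0)*(M u u - SM K) ≤ E K := by
    intro K
    have h := ht0le
    rw [ht0eq K] at h
    have h2 : 0 ≤ (-ν0)*ρ^2*(bG y y - SG K) :=
      mul_nonneg (mul_nonneg (by linarith) (sq_nonneg ρ)) (by linarith [hSG_le K])
    linarith [hT3nonneg K]
  have hGbound : ∀ K, (-ν0)*ρ^2*(bG y y - SG K) ≤ E K := by
    intro K
    have h := ht0le
    rw [ht0eq K] at h
    have h2 : 0 ≤ (1-ν0)*(M u u - SM K) :=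
      mul_nonneg (by linarith) (by linarith [hSM_le K])
    linarith [hT3nonneg K]
  have hT3bound : ∀ K, T3 K ≤ E K := by
    intro K
    have h := ht0le
    rw [ht0eq K] at h
    have h2 : 0 ≤ (-ν0)*ρ^2*(bG y y - SG K) :=
      mul_nonneg (mul_nonneg (by linarith) (sq_nonneg ρ)) (by linarith [hSG_le K])
    have h3 : 0 ≤ (1-ν0)*(M u u - SM K) :=
      mul_nonneg (by linarith) (by linarith [hSM_le K])
    linarith
  -- limits of SM and SG
  have hSMlim : Tendsto SM atTop (nhds (M u u)) := by
    have h0 : Tendsto (fun K => M u u - SM K) atTop (nhds 0) := by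
      have hup : Tendsto (fun K => E K / (1-ν0)) atTop (nhds 0) := by
        have := hElim.div_const (1-ν0)
        rwa [zero_div] at this
      refine tendsto_of_tendsto_of_tendsto_of_le_of_le tendsto_const_nhds hup ?_ ?_
      · intro K; simp only []; linarith [hSM_le K]
      · intro K
        rw [le_div_iff₀ h1ν]
        calc (M u u - SM K) * (1-ν0) = (1-ν0)*(M u u - SM K) := by ring
          _ ≤ E K := hMbound K
    have h1 := h0.const_sub (M u u)
    simp only [sub_sub_cancel, sub_zero] at h1
    exact h1
  have hfacpos : 0 < (-ν0)*ρ^2 := mul_pos (by linarith) (pow_pos hρ 2)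
  have hSGlim : Tendsto SG atTop (nhds (bG y y)) := by
    have h0 : Tendsto (fun K => bG y y - SG K) atTop (nhds 0) := by
      have hup : Tendsto (fun K => E K / ((-ν0)*ρ^2)) atTop (nhds 0) := by
        have := hElim.div_const ((-ν0)*ρ^2)
        rwa [zero_div] at this
      refine tendsto_of_tendsto_of_tendsto_of_le_of_le tendsto_const_nhds hup ?_ ?_
      · intro K; simp only []; linarith [hSG_le K]
      · intro K
        rw [le_div_iff₀ hfacpos]
        calc (bG y y - SG K) * ((-ν0)*ρ^2) = (-ν0)*ρ^2*(bG y y - SG K) := by ring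
          _ ≤ E K := hGbound K
    have h1 := h0.const_sub (bG y y)
    simp only [sub_sub_cancel, sub_zero] at h1
    exact h1
  -- termwise vanishing
  have hterm0 : ∀ i, 1 ≤ i →
      ((1-ν0)*(lam i)^2 - ρ*(1-2*ν0)*(lam i) - ν0*ρ^2) * (β i)^2 = 0 := by
    intro i hi
    refine le_antisymm ?_ (hq0 i hi)
    apply ge_of_tendsto hElim
    filter_upwards [eventually_ge_atTop i] with K hK
    calc ((1-ν0)*(lam i)^2 - ρ*(1-2*ν0)*(lam i) - ν0*ρ^2) * (β i)^2
        ≤ T3 K := by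
          simp only [hT3def]
          exact Finset.single_le_sum (f := fun i =>
            ((1-ν0)*(lam i)^2 - ρ*(1-2*ν0)*(lam i) - ν0*ρ^2) * (β i)^2)
            (fun j hj => hq0 j (Finset.mem_Icc.mp hj).1)
            (Finset.mem_Icc.mpr ⟨hi, hK⟩)
      _ ≤ E K := hT3bound K
  have hlam_eq : ∀ i, 1 ≤ i →
      lam i * (β i)^2 = ρ * (β i)^2 ∧ (lam i)^2 * (β i)^2 = ρ^2 * (β i)^2 := by
    intro i hi
    by_cases hβ0 : β i = 0
    · rw [hβ0]; norm_num
    · have hq := hterm0 i hi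
      have hβ2 : (β i)^2 ≠ 0 := pow_ne_zero 2 hβ0
      have hqz : (1-ν0)*(lam i)^2 - ρ*(1-2*ν0)*(lam i) - ν0*ρ^2 = 0 := by
        rcases mul_eq_zero.mp hq with h | h
        · exact h
        · exact absurd h hβ2
      have hiS : i ∉ S := fun hmem => hβ0 (hβS i hmem)
      have hlam := hlamS i hi hiS
      rw [hσdef] at hlam
      have hρeq : lam i = ρ := LG_qzero ρ ν0 (lam i) hρ hνk hlam hqz
      constructor <;> rw [hρeq]
  have hSN_eq : ∀ K, SN K = ρ * SG K := by
    intro K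
    simp only [hSNdef, hSGdef, Finset.mul_sum]
    exact Finset.sum_congr rfl fun i hi => (hlam_eq i (Finset.mem_Icc.mp hi).1).1
  have hSM_eq : ∀ K, SM K = ρ^2 * SG K := by
    intro K
    simp only [hSMdef, hSGdef, Finset.mul_sum]
    exact Finset.sum_congr rfl fun i hi => (hlam_eq i (Finset.mem_Icc.mp hi).1).2
  have hN0 : N u u = ρ * bG y y := by
    have h1 : Tendsto SN atTop (nhds (ρ * bG y y)) := by
      have heq : SN = fun K => ρ * SG K := funext hSN_eq
      rw [heq]
      exact hSGlim.const_mul ρ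
    exact tendsto_nhds_unique hSNlim h1
  have hM0 : M u u = ρ^2 * bG y y := by
    have h1 : Tendsto SM atTop (nhds (ρ^2 * bG y y)) := by
      have heq : SM = fun K => ρ^2 * SG K := funext hSM_eq
      rw [heq]
      exact hSGlim.const_mul (ρ^2)
    exact tendsto_nhds_unique hSMlim h1
  -- final contradiction
  have hfinal : d ⬝ᵥ (B *ᵥ d) = 0 := by
    rw [hdotB, hM0, hN0]
    ring
  rw [hdotBz] at hfinal
  linarith
end

section
/- Assume additionally that the eigenvalue sequence is nondecreasing (λ_i ≤ λ_{i+1} for all i), that m ≥ n is a natural number, and that ρ ≤ λ_{m+1}. Then for each k ∈ {1, …, n} with ν_k < 0 the lower eigenvalue bound λ_{m+1−k} ≥ ρ − ρ/(1 − ν_k) holds. In particular, if moreover xᵀ A_0 x < ρ xᵀ A_1 x for every nonzero x ∈ ℝⁿ (i.e., ρ exceeds the largest eigenvalue Λ_n of A_0 x = Λ A_1 x), then ν_n < 0 and the bound λ_{m+1−k} ≥ ρ − ρ/(1 − ν_k) holds for all k = 1, …, n. -/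
open Matrix Filter

private lemma dot_sum_right {n : Type*} [Fintype n] {ι : Type*} (s : Finset ι)
    (c : n → ℝ) (w : ι → n → ℝ) :
    c ⬝ᵥ (∑ i ∈ s, w i) = ∑ i ∈ s, c ⬝ᵥ w i := by
  simp only [dotProduct, Finset.sum_apply, Finset.mul_sum]
  exact Finset.sum_comm

private lemma sum_dot_left {n : Type*} [Fintype n] {ι : Type*} (s : Finset ι)
    (c : n → ℝ) (w : ι → n → ℝ) :
    (∑ i ∈ s, w i) ⬝ᵥ c = ∑ i ∈ s, w i ⬝ᵥ c := by
  simp only [dotProduct, Finset.sum_apply, Finset.sum_mul]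
  exact Finset.sum_comm

private lemma bilin_expand {Y : Type*} [AddCommGroup Y] [Module ℝ Y] {n : ℕ}
    (P : Y →ₗ[ℝ] Y →ₗ[ℝ] ℝ) (vv : Fin n → Y) (c : Fin n → ℝ) (ψ : Y) :
    P (∑ j, c j • vv j) ψ = ∑ j, c j * P (vv j) ψ := by
  rw [map_sum, LinearMap.sum_apply]
  exact Finset.sum_congr rfl fun j _ => by
    rw [LinearMap.map_smul, LinearMap.smul_apply, smul_eq_mul]

private lemma bilin_expand_right {Y : Type*} [AddCommGroup Y] [Module ℝ Y] {n : ℕ}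
    (P : Y →ₗ[ℝ] Y →ₗ[ℝ] ℝ) (vv : Fin n → Y) (c : Fin n → ℝ) (ψ : Y) :
    P ψ (∑ j, c j • vv j) = ∑ j, c j * P ψ (vv j) := by
  rw [map_sum]
  exact Finset.sum_congr rfl fun j _ => by rw [LinearMap.map_smul, smul_eq_mul]

private lemma quad_expand {Y : Type*} [AddCommGroup Y] [Module ℝ Y] {n : ℕ}
    (P : Y →ₗ[ℝ] Y →ₗ[ℝ] ℝ) (vv : Fin n → Y) (c : Fin n → ℝ)
    (Q : Matrix (Fin n) (Fin n) ℝ) (hQ : ∀ i j, Q i j = P (vv i) (vv j)) :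
    c ⬝ᵥ (Q *ᵥ c) = P (∑ j, c j • vv j) (∑ j, c j • vv j) := by
  rw [bilin_expand]
  simp only [dotProduct, Matrix.mulVec]
  refine Finset.sum_congr rfl fun j _ => ?_
  rw [bilin_expand_right, Finset.mul_sum, Finset.mul_sum]
  refine Finset.sum_congr rfl fun i _ => ?_
  rw [hQ j i]
  ring

private lemma dot_mulVec_sum {n k : ℕ} (t : Fin k → ℝ) (zz : Fin k → Fin n → ℝ)
    (Q : Matrix (Fin n) (Fin n) ℝ) :
    (fun j => ∑ i, t i * zz i j) ⬝ᵥ (Q *ᵥ (fun j => ∑ i, t i * zz i j))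
      = ∑ i, ∑ i', t i * t i' * (zz i ⬝ᵥ (Q *ᵥ zz i')) := by
  have hc : (fun j => ∑ i, t i * zz i j) = ∑ i, t i • zz i := by
    funext j; simp [Finset.sum_apply]
  rw [hc]
  have hQv : Q *ᵥ (∑ i, t i • zz i) = ∑ i, t i • (Q *ᵥ zz i) := by
    rw [show Q *ᵥ (∑ i, t i • zz i) = Q.mulVecLin (∑ i, t i • zz i) from rfl, map_sum]
    exact Finset.sum_congr rfl fun i _ => by
      rw [LinearMap.map_smul, Matrix.mulVecLin_apply]
  rw [hQv, sum_dot_left]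
  refine Finset.sum_congr rfl fun i _ => ?_
  rw [smul_dotProduct, dot_sum_right, smul_eq_mul, Finset.mul_sum]
  refine Finset.sum_congr rfl fun i' _ => ?_
  rw [dotProduct_smul, smul_eq_mul]
  ring

private lemma bessel_ineq {X : Type*} [AddCommGroup X] [Module ℝ X]
    (bG : X →ₗ[ℝ] X →ₗ[ℝ] ℝ)
    (hbG_symm : ∀ x y : X, bG x y = bG y x)
    (hbG_psd : ∀ x : X, 0 ≤ bG x x)
    (e : ℕ → X)
    (horth : ∀ i j : ℕ, 1 ≤ i → 1 ≤ j → bG (e i) (e j) = if i = j then (1:ℝ) else 0)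
    (x : X) (K : ℕ) :
    ∑ i ∈ Finset.Icc 1 K, (bG x (e i))^2 ≤ bG x x := by
  have h0 := hbG_psd (x - ∑ i ∈ Finset.Icc 1 K, (bG x (e i)) • e i)
  have hbase : ∀ y : X, bG y (∑ i ∈ Finset.Icc 1 K, (bG x (e i)) • e i)
      = ∑ i ∈ Finset.Icc 1 K, (bG x (e i)) * bG y (e i) := by
    intro y
    rw [map_sum]
    exact Finset.sum_congr rfl fun i hi => by
      rw [LinearMap.map_smul, smul_eq_mul]
  have hcollapse : ∀ j ∈ Finset.Icc 1 K,
      bG (e j) (∑ i ∈ Finset.Icc 1 K, (bG x (e i)) • e i) = bG x (e j) := by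
    intro j hj
    rw [hbase]
    have : ∀ i ∈ Finset.Icc 1 K, (bG x (e i)) * bG (e j) (e i)
        = if j = i then bG x (e i) else 0 := by
      intro i hi
      rw [hbG_symm (e j) (e i),
        horth i j (Finset.mem_Icc.mp hi).1 (Finset.mem_Icc.mp hj).1]
      by_cases h : i = j
      · simp [h]
      · simp [h, Ne.symm h]
    rw [Finset.sum_congr rfl this, Finset.sum_ite_eq _ j, if_pos hj]
  have hxS : bG x (∑ i ∈ Finset.Icc 1 K, (bG x (e i)) • e i)
      = ∑ i ∈ Finset.Icc 1 K, (bG x (e i))^2 := by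
    rw [hbase]
    exact Finset.sum_congr rfl fun i hi => by ring
  have hSS : bG (∑ i ∈ Finset.Icc 1 K, (bG x (e i)) • e i)
      (∑ i ∈ Finset.Icc 1 K, (bG x (e i)) • e i)
      = ∑ i ∈ Finset.Icc 1 K, (bG x (e i))^2 := by
    rw [hbase]
    refine Finset.sum_congr rfl fun i hi => ?_
    rw [hbG_symm (∑ i ∈ Finset.Icc 1 K, (bG x (e i)) • e i) (e i), hcollapse i hi]; ring
  have hSx : bG (∑ i ∈ Finset.Icc 1 K, (bG x (e i)) • e i) x
      = ∑ i ∈ Finset.Icc 1 K, (bG x (e i))^2 := by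
    rw [hbG_symm, hxS]
  simp only [map_sub, LinearMap.sub_apply] at h0
  rw [hxS, hSS, hSx] at h0
  linarith

set_option maxHeartbeats 1000000 in
/-- Lower bounds for the eigenvalues `λ_{m+1−k}` from the Lehmann–Goerisch
    theorem, given an a priori lower bound `ρ ≤ λ_{m+1}`. -/
theorem lehmann_goerisch_lower_bounds
    {D X : Type*} [AddCommGroup D] [Module ℝ D] [AddCommGroup X] [Module ℝ X]
    (M N : D →ₗ[ℝ] D →ₗ[ℝ] ℝ)
    (hM_symm : ∀ u v : D, M u v = M v u)
    (hN_symm : ∀ u v : D, N u v = N v u)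
    (hM_pos : ∀ u : D, u ≠ 0 → 0 < M u u)
    (bG : X →ₗ[ℝ] X →ₗ[ℝ] ℝ)
    (hbG_symm : ∀ x y : X, bG x y = bG y x)
    (hbG_psd : ∀ x : X, 0 ≤ bG x x)
    (T : D →ₗ[ℝ] X)
    (hT : ∀ u v : D, bG (T u) (T v) = M u v)
    (lam : ℕ → ℝ) (φ : ℕ → D)
    (h_eig : ∀ i : ℕ, 1 ≤ i → ∀ v : D, M (φ i) v = lam i * N (φ i) v)
    (h_orth : ∀ i j : ℕ, 1 ≤ i → 1 ≤ j → M (φ i) (φ j) = if i = j then (1 : ℝ) else 0)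
    (h_complete : ∀ v : D,
      Tendsto (fun K : ℕ => ∑ i ∈ Finset.Icc 1 K, lam i * (N v (φ i)) ^ 2)
        atTop (nhds (N v v)))
    (h_lam_mono : ∀ i : ℕ, 1 ≤ i → lam i ≤ lam (i + 1))
    (n : ℕ) (v : Fin n → D) (w : Fin n → X)
    (hw : ∀ i : Fin n, ∀ ψ : D, bG (w i) (T ψ) = N (v i) ψ)
    (ρ : ℝ) (hρ : 0 < ρ)
    (A0 A1 A2 A B : Matrix (Fin n) (Fin n) ℝ)
    (hA0 : ∀ i j, A0 i j = M (v i) (v j))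
    (hA1 : ∀ i j, A1 i j = N (v i) (v j))
    (hA2 : ∀ i j, A2 i j = bG (w i) (w j))
    (hA : A = A0 - ρ • A1)
    (hB : B = A0 - (2 * ρ) • A1 + ρ ^ 2 • A2)
    (hBpos : B.PosDef)
    (ν : Fin n → ℝ) (hν_mono : Monotone ν)
    (z : Fin n → Fin n → ℝ)
    (hz_orth : ∀ i j, z i ⬝ᵥ (B *ᵥ z j) = if i = j then (1 : ℝ) else 0)
    (hz_eig : ∀ k, A *ᵥ z k = ν k • (B *ᵥ z k))
    (m : ℕ) (hmn : n ≤ m) (hρlam : ρ ≤ lam (m + 1)) :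
    (∀ k : ℕ, (hk1 : 1 ≤ k) → (hkn : k ≤ n) → ν ⟨k - 1, by omega⟩ < 0 →
      ρ - ρ / (1 - ν ⟨k - 1, by omega⟩) ≤ lam (m + 1 - k)) ∧
    ((∀ x : Fin n → ℝ, x ≠ 0 → x ⬝ᵥ (A0 *ᵥ x) < ρ * (x ⬝ᵥ (A1 *ᵥ x))) →
      (∀ hn : 0 < n, ν ⟨n - 1, by omega⟩ < 0) ∧
      (∀ k : ℕ, (hk1 : 1 ≤ k) → (hkn : k ≤ n) →
        ρ - ρ / (1 - ν ⟨k - 1, by omega⟩) ≤ lam (m + 1 - k))) := by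
  -- monotonicity of the eigenvalue sequence
  have lam_mono' : ∀ i j : ℕ, 1 ≤ i → i ≤ j → lam i ≤ lam j := by
    intro i j h1 hij
    induction j, hij using Nat.le_induction with
    | base => exact le_rfl
    | succ jj hjj ih => exact le_trans ih (h_lam_mono jj (le_trans h1 hjj))
  have key : ∀ (k : ℕ), 1 ≤ k → k ≤ n → ∀ kk : Fin n, (kk : ℕ) = k - 1 →
      ν kk < 0 → ρ - ρ / (1 - ν kk) ≤ lam (m + 1 - k) := by
    intro k hk1 hkn kk hkk hνneg
    by_contra hcon
    push_neg at hcon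
    have h1ν : (0:ℝ) < 1 - ν kk := by linarith
    have h1νne : (1:ℝ) - ν kk ≠ 0 := ne_of_gt h1ν
    set μ := ρ - ρ / (1 - ν kk) with hμdef
    have hμρ : μ < ρ := by
      have : 0 < ρ / (1 - ν kk) := div_pos hρ h1ν
      rw [hμdef]; linarith
    have hμeq : μ * (1 - ν kk) = -(ν kk) * ρ := by
      rw [hμdef]; field_simp; ring
    -- the embedding of Fin k into Fin n
    have hembp : ∀ i : Fin k, (i : ℕ) < n := fun i => lt_of_lt_of_le i.isLt hkn
    set emb : Fin k → Fin n := fun i => ⟨i, hembp i⟩ with hembdef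
    have hembinj : Function.Injective emb := by
      intro x y hxy
      have h := congrArg Fin.val hxy
      exact Fin.ext h
    -- the constraint matrix and a nonzero kernel vector
    set Cm : Matrix (Fin (k-1)) (Fin k) ℝ :=
      fun l i => ∑ j : Fin n, z (emb i) j * N (v j) (φ (m + 2 - k + l)) with hCmdef
    obtain ⟨t, htne, htker⟩ : ∃ t : Fin k → ℝ, t ≠ 0 ∧ Cm.mulVecLin t = 0 := by
      have hni : ¬ Function.Injective Cm.mulVecLin := by
        intro h
        have := LinearMap.finrank_le_finrank_of_injective h
        rw [Module.finrank_fin_fun, Module.finrank_fin_fun] at this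
        omega
      rw [Function.not_injective_iff] at hni
      obtain ⟨t1, t2, heq, hne⟩ := hni
      exact ⟨t1 - t2, sub_ne_zero.mpr hne, by rw [map_sub, heq, sub_self]⟩
    set c : Fin n → ℝ := fun j => ∑ i : Fin k, t i * z (emb i) j with hcdef
    set u : D := ∑ j : Fin n, c j • v j with hudef
    set wc : X := ∑ j : Fin n, c j • w j with hwcdef
    -- basic bilinear expansions
    have hNu : ∀ ψ : D, N u ψ = ∑ j : Fin n, c j * N (v j) ψ := by
      intro ψ; rw [hudef]; exact bilin_expand N v c ψ
    have hbGwc : ∀ ψ : D, bG wc (T ψ) = N u ψ := by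
      intro ψ
      rw [hwcdef, hNu ψ]
      rw [show (bG (∑ j : Fin n, c j • w j)) (T ψ)
          = ∑ j : Fin n, c j * bG (w j) (T ψ) from bilin_expand bG w c (T ψ)]
      exact Finset.sum_congr rfl fun j _ => by rw [hw j ψ]
    -- quadratic forms
    have hMq : c ⬝ᵥ (A0 *ᵥ c) = M u u := by rw [hudef]; exact quad_expand M v c A0 hA0
    have hNq : c ⬝ᵥ (A1 *ᵥ c) = N u u := by rw [hudef]; exact quad_expand N v c A1 hA1
    have hWq : c ⬝ᵥ (A2 *ᵥ c) = bG wc wc := by rw [hwcdef]; exact quad_expand bG w c A2 hA2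
    have hAc : c ⬝ᵥ (A *ᵥ c) = M u u - ρ * N u u := by
      rw [hA, Matrix.sub_mulVec, Matrix.smul_mulVec, dotProduct_sub,
        dotProduct_smul, smul_eq_mul, hMq, hNq]
    have hBc : c ⬝ᵥ (B *ᵥ c) = M u u - 2 * ρ * N u u + ρ^2 * bG wc wc := by
      rw [hB, Matrix.add_mulVec, Matrix.sub_mulVec, Matrix.smul_mulVec,
        Matrix.smul_mulVec, dotProduct_add, dotProduct_sub,
        dotProduct_smul, dotProduct_smul, smul_eq_mul, smul_eq_mul,
        hMq, hNq, hWq]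
    -- spectral quadratic forms
    have cA' : c ⬝ᵥ (A *ᵥ c)
        = ∑ i : Fin k, ∑ i' : Fin k, t i * t i' * (z (emb i) ⬝ᵥ (A *ᵥ z (emb i'))) := by
      rw [hcdef]; exact dot_mulVec_sum t (fun i => z (emb i)) A
    have cB' : c ⬝ᵥ (B *ᵥ c)
        = ∑ i : Fin k, ∑ i' : Fin k, t i * t i' * (z (emb i) ⬝ᵥ (B *ᵥ z (emb i'))) := by
      rw [hcdef]; exact dot_mulVec_sum t (fun i => z (emb i)) B
    have cB : c ⬝ᵥ (B *ᵥ c) = ∑ i : Fin k, (t i)^2 := by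
      rw [cB']
      refine Finset.sum_congr rfl fun i _ => ?_
      have hrow : ∀ i' : Fin k, t i * t i' * (z (emb i) ⬝ᵥ (B *ᵥ z (emb i')))
          = if i' = i then (t i)^2 else 0 := by
        intro i'
        rw [hz_orth]
        by_cases h : i' = i
        · subst h; rw [if_pos rfl, if_pos rfl]; ring
        · have hne : emb i ≠ emb i' := fun hem => h (hembinj hem).symm
          simp [hne, h]
      rw [Finset.sum_congr rfl (fun i' _ => hrow i'),
        Finset.sum_ite_eq' Finset.univ i (fun _ => (t i)^2)]
      simp
    have cA : c ⬝ᵥ (A *ᵥ c) = ∑ i : Fin k, ν (emb i) * (t i)^2 := by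
      rw [cA']
      refine Finset.sum_congr rfl fun i _ => ?_
      have hrow : ∀ i' : Fin k, t i * t i' * (z (emb i) ⬝ᵥ (A *ᵥ z (emb i')))
          = if i' = i then ν (emb i) * (t i)^2 else 0 := by
        intro i'
        rw [hz_eig (emb i'), dotProduct_smul, smul_eq_mul, hz_orth]
        by_cases h : i' = i
        · subst h; rw [if_pos rfl, if_pos rfl]; ring
        · have hne : emb i ≠ emb i' := fun hem => h (hembinj hem).symm
          simp [hne, h]
      rw [Finset.sum_congr rfl (fun i' _ => hrow i'),
        Finset.sum_ite_eq' Finset.univ i (fun _ => ν (emb i) * (t i)^2)]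
      simp
    -- eigenvalue inequality on the span
    have hineq : c ⬝ᵥ (A *ᵥ c) ≤ ν kk * (c ⬝ᵥ (B *ᵥ c)) := by
      rw [cA, cB, Finset.mul_sum]
      refine Finset.sum_le_sum fun i _ => ?_
      have hle : emb i ≤ kk := by
        rw [Fin.le_def, hkk]
        have := i.isLt
        simp only [hembdef]
        omega
      exact mul_le_mul_of_nonneg_right (hν_mono hle) (sq_nonneg _)
    have hBcpos : 0 < c ⬝ᵥ (B *ᵥ c) := by
      rw [cB]
      obtain ⟨i0, hi0⟩ := Function.ne_iff.mp htne
      have hi0' : t i0 ≠ 0 := by simpa using hi0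
      have h1 : 0 < (t i0)^2 :=
        lt_of_le_of_ne (sq_nonneg _) (Ne.symm (pow_ne_zero 2 hi0'))
      have h2 : (t i0)^2 ≤ ∑ x : Fin k, (t x)^2 :=
        Finset.single_le_sum (f := fun i => (t i)^2)
          (fun i _ => sq_nonneg _) (Finset.mem_univ i0)
      linarith
    have hMρN : M u u - ρ * N u u < 0 := by
      have h1 : c ⬝ᵥ (A *ᵥ c) < 0 :=
        lt_of_le_of_lt hineq (mul_neg_of_neg_of_pos hνneg hBcpos)
      rw [hAc] at h1; exact h1
    -- the vanishing of constrained coefficients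
    have hconstr : ∀ l : ℕ, m + 2 - k ≤ l → l ≤ m → N u (φ l) = 0 := by
      intro l hl1 hl2
      have hk2 : 2 ≤ k := by omega
      have hlk : l - (m + 2 - k) < k - 1 := by omega
      have hidx : m + 2 - k + (l - (m + 2 - k)) = l := by omega
      have h0 : Cm.mulVecLin t ⟨l - (m + 2 - k), hlk⟩ = 0 := by rw [htker]; rfl
      rw [Matrix.mulVecLin_apply] at h0
      have h1 : Cm.mulVec t ⟨l - (m + 2 - k), hlk⟩
          = ∑ i : Fin k, t i * (∑ j : Fin n, z (emb i) j * N (v j) (φ l)) := by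
        simp only [Matrix.mulVec, dotProduct, hCmdef, Fin.val_mk, hidx]
        exact Finset.sum_congr rfl fun i _ => mul_comm _ _
      have h2 : N u (φ l) = ∑ i : Fin k, t i * (∑ j : Fin n, z (emb i) j * N (v j) (φ l)) := by
        rw [hNu (φ l)]
        simp only [hcdef]
        calc ∑ j : Fin n, (∑ i : Fin k, t i * z (emb i) j) * (N (v j)) (φ l)
            = ∑ j : Fin n, ∑ i : Fin k, t i * z (emb i) j * (N (v j)) (φ l) :=
              Finset.sum_congr rfl fun j _ => Finset.sum_mul _ _ _
          _ = ∑ i : Fin k, ∑ j : Fin n, t i * z (emb i) j * (N (v j)) (φ l) :=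
              Finset.sum_comm
          _ = ∑ i : Fin k, t i * ∑ j : Fin n, z (emb i) j * (N (v j)) (φ l) := by
              refine Finset.sum_congr rfl fun i _ => ?_
              rw [Finset.mul_sum]
              exact Finset.sum_congr rfl fun j _ => by ring
      rw [h2, ← h1]
      exact h0

    -- Bessel inequalities
    have hTφorth : ∀ i j : ℕ, 1 ≤ i → 1 ≤ j →
        bG (T (φ i)) (T (φ j)) = if i = j then (1:ℝ) else 0 := by
      intro i j hi hj; rw [hT]; exact h_orth i j hi hj
    have hS2 : ∀ K : ℕ, ∑ i ∈ Finset.Icc 1 K, (lam i * N u (φ i))^2 ≤ M u u := by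
      intro K
      have hb := bessel_ineq bG hbG_symm hbG_psd (fun i => T (φ i)) hTφorth (T u) K
      rw [hT u u] at hb
      refine le_trans (le_of_eq ?_) hb
      refine Finset.sum_congr rfl fun i hi => ?_
      have hi1 := (Finset.mem_Icc.mp hi).1
      rw [hT u (φ i), hM_symm u (φ i), h_eig i hi1 u, hN_symm (φ i) u]
    have hS0 : ∀ K : ℕ, ∑ i ∈ Finset.Icc 1 K, (N u (φ i))^2 ≤ bG wc wc := by
      intro K
      have hb := bessel_ineq bG hbG_symm hbG_psd (fun i => T (φ i)) hTφorth wc K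
      refine le_trans (le_of_eq ?_) hb
      exact Finset.sum_congr rfl fun i hi => by rw [hbGwc (φ i)]
    -- per-term polynomial identity
    have hgid : ∀ lamv aa : ℝ, (1 - ν kk)*(lamv - ρ)*(lamv - μ)*aa^2
        = (1 - ν kk)*(lamv*aa)^2 - ρ*(1 - 2*(ν kk))*(lamv*aa^2) - (ν kk)*ρ^2*aa^2 := by
      intro lamv aa
      linear_combination (aa^2*(ρ - lamv)) * hμeq
    -- nonnegativity of the terms
    have hgnn : ∀ i : ℕ, 1 ≤ i →
        0 ≤ (1 - ν kk)*(lam i - ρ)*(lam i - μ)*(N u (φ i))^2 := by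
      intro i hi
      rcases show i ≤ m + 1 - k ∨ (m + 2 - k ≤ i ∧ i ≤ m) ∨ m + 1 ≤ i by omega
        with h | h | h
      · have hle : lam i ≤ lam (m + 1 - k) := lam_mono' i _ hi h
        have hlt : lam i < μ := lt_of_le_of_lt hle hcon
        have h2 : (0:ℝ) < ρ - lam i := by linarith
        have h3 : (0:ℝ) < μ - lam i := by linarith
        have h4 : (0:ℝ) < (1 - ν kk)*(ρ - lam i)*(μ - lam i) :=
          mul_pos (mul_pos h1ν h2) h3
        have h5 : (1 - ν kk)*(lam i - ρ)*(lam i - μ)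
            = (1 - ν kk)*(ρ - lam i)*(μ - lam i) := by ring
        have h1 : 0 ≤ (1 - ν kk)*(lam i - ρ)*(lam i - μ) := by linarith
        exact mul_nonneg h1 (sq_nonneg _)
      · rw [hconstr i h.1 h.2]
        simp
      · have hρle : ρ ≤ lam i := le_trans hρlam (lam_mono' (m+1) i (by omega) h)
        have h2 : (0:ℝ) ≤ lam i - ρ := by linarith
        have h3 : (0:ℝ) ≤ lam i - μ := by linarith
        exact mul_nonneg (mul_nonneg (mul_nonneg (le_of_lt h1ν) h2) h3) (sq_nonneg _)
    -- the partial sums are bounded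
    have hsum_le : ∀ K : ℕ,
        ∑ i ∈ Finset.Icc 1 K, (1 - ν kk)*(lam i - ρ)*(lam i - μ)*(N u (φ i))^2
        ≤ (1 - ν kk)*(M u u) - (ν kk)*ρ^2*(bG wc wc)
          - ρ*(1 - 2*(ν kk))*(∑ i ∈ Finset.Icc 1 K, lam i * (N u (φ i))^2) := by
      intro K
      have e1 : ∑ i ∈ Finset.Icc 1 K, (1 - ν kk)*(lam i - ρ)*(lam i - μ)*(N u (φ i))^2
          = (1 - ν kk)*(∑ i ∈ Finset.Icc 1 K, (lam i * N u (φ i))^2)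
            - ρ*(1 - 2*(ν kk))*(∑ i ∈ Finset.Icc 1 K, lam i * (N u (φ i))^2)
            - (ν kk)*ρ^2*(∑ i ∈ Finset.Icc 1 K, (N u (φ i))^2) := by
        rw [Finset.mul_sum, Finset.mul_sum, Finset.mul_sum, ← Finset.sum_sub_distrib,
          ← Finset.sum_sub_distrib]
        exact Finset.sum_congr rfl fun i _ => hgid (lam i) (N u (φ i))
      rw [e1]
      have c1 : (1 - ν kk)*(∑ i ∈ Finset.Icc 1 K, (lam i * N u (φ i))^2)
          ≤ (1 - ν kk)*(M u u) := mul_le_mul_of_nonneg_left (hS2 K) (le_of_lt h1ν)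
      have c2 : (-(ν kk))*(∑ i ∈ Finset.Icc 1 K, (N u (φ i))^2)
          ≤ (-(ν kk))*(bG wc wc) :=
        mul_le_mul_of_nonneg_left (hS0 K) (by linarith)
      have hρ2 : (0:ℝ) ≤ ρ^2 := sq_nonneg _
      nlinarith [sq_nonneg ρ]
    -- the limit value is nonpositive
    have hLle : (1 - ν kk)*(M u u) - (ν kk)*ρ^2*(bG wc wc) - ρ*(1 - 2*(ν kk))*(N u u)
        ≤ 0 := by
      have he : (1 - ν kk)*(M u u) - (ν kk)*ρ^2*(bG wc wc) - ρ*(1 - 2*(ν kk))*(N u u)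
          = (c ⬝ᵥ (A *ᵥ c)) - ν kk * (c ⬝ᵥ (B *ᵥ c)) := by
        rw [hAc, hBc]; ring
      rw [he]
      linarith [hineq]
    have htendsto : Tendsto (fun K : ℕ => (1 - ν kk)*(M u u) - (ν kk)*ρ^2*(bG wc wc)
        - ρ*(1 - 2*(ν kk))*(∑ i ∈ Finset.Icc 1 K, lam i * (N u (φ i))^2)) atTop
        (nhds ((1 - ν kk)*(M u u) - (ν kk)*ρ^2*(bG wc wc) - ρ*(1 - 2*(ν kk))*(N u u))) :=
      tendsto_const_nhds.sub ((h_complete u).const_mul _)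
    have hF : ∀ K : ℕ,
        ∑ i ∈ Finset.Icc 1 K, (1 - ν kk)*(lam i - ρ)*(lam i - μ)*(N u (φ i))^2 ≤ 0 := by
      intro K
      have h1 : ∑ i ∈ Finset.Icc 1 K, (1 - ν kk)*(lam i - ρ)*(lam i - μ)*(N u (φ i))^2
          ≤ (1 - ν kk)*(M u u) - (ν kk)*ρ^2*(bG wc wc) - ρ*(1 - 2*(ν kk))*(N u u) := by
        refine ge_of_tendsto htendsto (eventually_atTop.mpr ⟨K, fun K' hK' => ?_⟩)
        calc ∑ i ∈ Finset.Icc 1 K, (1 - ν kk)*(lam i - ρ)*(lam i - μ)*(N u (φ i))^2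
            ≤ ∑ i ∈ Finset.Icc 1 K', (1 - ν kk)*(lam i - ρ)*(lam i - μ)*(N u (φ i))^2 :=
              Finset.sum_le_sum_of_subset_of_nonneg
                (Finset.Icc_subset_Icc_right hK')
                (fun i hi _ => hgnn i (Finset.mem_Icc.mp hi).1)
          _ ≤ _ := hsum_le K'
      linarith
    have hterm : ∀ i : ℕ, 1 ≤ i →
        (1 - ν kk)*(lam i - ρ)*(lam i - μ)*(N u (φ i))^2 = 0 := by
      intro i hi
      have hge := hgnn i hi
      have hle : (1 - ν kk)*(lam i - ρ)*(lam i - μ)*(N u (φ i))^2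
          ≤ ∑ j ∈ Finset.Icc 1 i, (1 - ν kk)*(lam j - ρ)*(lam j - μ)*(N u (φ j))^2 :=
        Finset.single_le_sum
          (f := fun j => (1 - ν kk)*(lam j - ρ)*(lam j - μ)*(N u (φ j))^2)
          (fun j hj => hgnn j (Finset.mem_Icc.mp hj).1)
          (Finset.mem_Icc.mpr ⟨hi, le_refl i⟩)
      linarith [hF i]
    have hals : ∀ i : ℕ, 1 ≤ i →
        (lam i * N u (φ i))^2 = ρ * (lam i * (N u (φ i))^2) := by
      intro i hi
      by_cases ha : N u (φ i) = 0
      · rw [ha]; ring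
      · have h0 : (1 - ν kk)*(lam i - ρ)*(lam i - μ) = 0 := by
          have h1 := hterm i hi
          have h2 : (N u (φ i))^2 ≠ 0 := pow_ne_zero _ ha
          exact (mul_eq_zero.mp h1).resolve_right h2
        have hcases : lam i = ρ ∨ lam i = μ := by
          rcases mul_eq_zero.mp h0 with h | h
          · rcases mul_eq_zero.mp h with h' | h'
            · exact absurd h' h1νne
            · left; linarith
          · right; linarith
        rcases hcases with h | h
        · rw [h]; ring
        · exfalso
          rcases show i ≤ m + 1 - k ∨ (m + 2 - k ≤ i ∧ i ≤ m) ∨ m + 1 ≤ i by omega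
            with hc1 | hc2 | hc3
          · have := lam_mono' i (m + 1 - k) hi hc1
            linarith
          · exact ha (hconstr i hc2.1 hc2.2)
          · have := lam_mono' (m + 1) i (by omega) hc3
            linarith
    have hfin : ∀ K : ℕ, ρ * (∑ i ∈ Finset.Icc 1 K, lam i * (N u (φ i))^2) ≤ M u u := by
      intro K
      rw [Finset.mul_sum]
      calc ∑ i ∈ Finset.Icc 1 K, ρ * (lam i * (N u (φ i))^2)
          = ∑ i ∈ Finset.Icc 1 K, (lam i * N u (φ i))^2 :=
            Finset.sum_congr rfl fun i hi => (hals i (Finset.mem_Icc.mp hi).1).symm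
        _ ≤ M u u := hS2 K
    have hlim2 : ρ * N u u ≤ M u u :=
      le_of_tendsto ((h_complete u).const_mul ρ) (Eventually.of_forall hfin)
    linarith [hMρN]
  constructor
  · intro k hk1 hkn hνneg
    exact key k hk1 hkn ⟨k - 1, by omega⟩ rfl hνneg
  · intro hstrict
    have hνn : ∀ hn : 0 < n, ν ⟨n - 1, by omega⟩ < 0 := by
      intro hn
      set j : Fin n := ⟨n - 1, by omega⟩ with hjdef
      have hz1 : z j ⬝ᵥ (B *ᵥ z j) = 1 := by rw [hz_orth]; simp
      have hzne : z j ≠ 0 := by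
        intro h
        rw [h, zero_dotProduct] at hz1
        exact zero_ne_one hz1
      have hAz : z j ⬝ᵥ (A *ᵥ z j) = ν j := by
        rw [hz_eig, dotProduct_smul, smul_eq_mul, hz1, mul_one]
      have hsplit : z j ⬝ᵥ (A *ᵥ z j)
          = z j ⬝ᵥ (A0 *ᵥ z j) - ρ * (z j ⬝ᵥ (A1 *ᵥ z j)) := by
        rw [hA, Matrix.sub_mulVec, Matrix.smul_mulVec, dotProduct_sub,
          dotProduct_smul, smul_eq_mul]
      have := hstrict (z j) hzne
      rw [hsplit] at hAz
      linarith
    refine ⟨hνn, ?_⟩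
    intro k hk1 hkn
    have hn : 0 < n := lt_of_lt_of_le hk1 hkn
    have hle : ν ⟨k - 1, by omega⟩ ≤ ν ⟨n - 1, by omega⟩ := by
      refine hν_mono ?_
      rw [Fin.le_def]
      simp only []
      omega
    exact key k hk1 hkn ⟨k - 1, by omega⟩ rfl (lt_of_le_of_lt hle (hνn hn))
end

section
/- For every v ∈ V admitting a decomposition v = v_0 + v′ with N(v_0, v_0) = 0 and v′ = Σ_{i=1}^∞ M(v′, u_i) u_i (the series converging in V), the identity N(v, v) = Σ_{i=1}^∞ λ_i (N(v, u_i))² holds, the series on the right being convergent. -/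
/-- If a symmetric positive-semidefinite bilinear form vanishes on the diagonal at `v0`,
    it vanishes against everything. -/
lemma psd_zero_of_diag_zero {V : Type*} [AddCommGroup V] [Module ℝ V]
    (N : V →ₗ[ℝ] V →ₗ[ℝ] ℝ)
    (hN_symm : ∀ u v : V, N u v = N v u)
    (hN_psd : ∀ v : V, 0 ≤ N v v)
    (v0 : V) (hv0 : N v0 v0 = 0) (w : V) : N v0 w = 0 := by
  set a := N w w with ha
  set b := N v0 w with hb
  have ha0 : 0 ≤ a := hN_psd w
  have hpos : (0:ℝ) < a + 1 := by linarith
  set t : ℝ := -b / (a + 1) with ht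
  have key : 0 ≤ N (v0 + t • w) (v0 + t • w) := hN_psd _
  have expand : N (v0 + t • w) (v0 + t • w)
      = N v0 v0 + 2 * t * b + t * t * a := by
    simp only [map_add, map_smul, LinearMap.add_apply, LinearMap.smul_apply, smul_eq_mul]
    rw [hN_symm w v0]
    ring
  rw [expand, hv0, zero_add] at key
  have htb : t * (a + 1) = -b := by
    rw [ht]; field_simp
  have e : (2 * t * b + t * t * a) * ((a + 1) * (a + 1)) = -(b * b) * (a + 2) := by
    linear_combination (2 * b * (a + 1) + t * a * (a + 1) - a * b) * htb
  have key2 : (0:ℝ) ≤ -(b * b) * (a + 2) := by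
    rw [← e]; exact mul_nonneg key (by positivity)
  by_contra h
  have hb2 : 0 < b * b := mul_self_pos.mpr h
  nlinarith

/-- Completeness relation (Assumption A2) for the Steklov-type setting:
    for `v = v₀ + v′` with `N(v₀,v₀) = 0` and `v′` expanded in the
    `M`-orthonormal eigenfunctions `u_i`, the series `Σ λ_i (N(v,u_i))²`
    converges with sum `N(v,v)`. -/
theorem completeness_relation
    {V : Type*} [NormedAddCommGroup V] [InnerProductSpace ℝ V] [CompleteSpace V]
    (N : V →ₗ[ℝ] V →ₗ[ℝ] ℝ)
    (hN_symm : ∀ u v : V, N u v = N v u)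
    (hN_psd : ∀ v : V, 0 ≤ N v v)
    (c : ℝ) (hN_cont : ∀ u v : V, |N u v| ≤ c * ‖u‖ * ‖v‖)
    (u : ℕ → V)
    (h_orth : ∀ i j : ℕ, (inner ℝ (u i) (u j) : ℝ) = if i = j then 1 else 0)
    (lam : ℕ → ℝ) (hlam : ∀ i, 0 < lam i)
    (h_eig : ∀ i : ℕ, ∀ v : V, (inner ℝ (u i) v : ℝ) = lam i * N (u i) v)
    (v v0 v' : V) (hdecomp : v = v0 + v')
    (hv0 : N v0 v0 = 0)
    (hv' : HasSum (fun i : ℕ => (inner ℝ v' (u i) : ℝ) • u i) v') :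
    HasSum (fun i : ℕ => lam i * (N v (u i)) ^ 2) (N v v) := by
  have hz : ∀ w, N v0 w = 0 := psd_zero_of_diag_zero N hN_symm hN_psd v0 hv0
  have hNv : ∀ w, N v w = N v' w := by
    intro w
    rw [hdecomp, map_add, LinearMap.add_apply, hz w, zero_add]
  have hNvv : N v v = N v' v' := by
    have h0 : N v' v0 = 0 := by rw [hN_symm]; exact hz v'
    rw [hNv, hdecomp, map_add, h0, zero_add]
  -- the continuous linear functional `N v' ·`
  let L : V →L[ℝ] ℝ := LinearMap.mkContinuous (N v') (c * ‖v'‖) (fun w => by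
    calc ‖N v' w‖ = |N v' w| := rfl
      _ ≤ c * ‖v'‖ * ‖w‖ := hN_cont v' w)
  have hS : HasSum (fun i : ℕ => L ((inner ℝ v' (u i) : ℝ) • u i)) (L v') := hv'.mapL L
  have hterm : ∀ i : ℕ, L ((inner ℝ v' (u i) : ℝ) • u i) = lam i * (N v (u i)) ^ 2 := by
    intro i
    have hc : (inner ℝ v' (u i) : ℝ) = lam i * N v (u i) := by
      rw [real_inner_comm, h_eig i v', hN_symm (u i) v', hNv]
    have hLu : L (u i) = N v (u i) := by
      show N v' (u i) = N v (u i)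
      rw [hNv]
    rw [map_smul, smul_eq_mul, hc, hLu]
    ring
  have hLv' : L v' = N v v := by
    show N v' v' = N v v
    rw [hNvv]
  rw [← hLv']
  exact (funext hterm : _) ▸ hS
end
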